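/- For every source p, R*_opt(p) ≥ inf over positive integers μ of (μ + lg max(p(1), (1 − p(1))/(2^μ − 1))), and this infimum over μ is attained. -/

import Mathlib

/-- A source: a positive, monotonically nonincreasing probability mass function on `Fin n`. -/
def IsSource (n : ℕ) (p : Fin n → ℝ) : Prop :=
  (∀ i, 0 < p i) ∧ (∑ i, p i = 1) ∧ (∀ i j : Fin n, i ≤ j → p j ≤ p i)

/-- A codeword-length vector: positive integer lengths satisfying the Kraft inequality. -/
def IsCLV (n : ℕ) (l : Fin n → ℤ) : Prop :=
  (∀ i, 1 ≤ l i) ∧ (∑ i, (2:ℝ) ^ (-(l i)) ≤ 1)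

/-- Maximum pointwise redundancy `R*(l,p) = max_i (l(i) + lg p(i))`. -/
noncomputable def Rstar (n : ℕ) (l : Fin n → ℤ) (p : Fin n → ℝ) : ℝ :=
  ⨆ i : Fin n, ((l i : ℝ) + Real.logb 2 (p i))

/-- Minimum maximum pointwise redundancy over all codeword-length vectors. -/
noncomputable def RstarOpt (n : ℕ) (p : Fin n → ℝ) : ℝ :=
  sInf {r : ℝ | ∃ l : Fin n → ℤ, IsCLV n l ∧ Rstar n l p = r}

/-! Let `q = p(1)` and `g(μ) = μ + lg max(q, (1 - q)/(2^μ - 1))`. Since `g(μ) ≥ μ + lg q`, `g` tends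
to infinity and attains its infimum over `μ ≥ 1`. For any codeword-length vector `l` with
`R = R*(l, p)`, every `p(i) ≤ 2^(R - l(i))`; summing over `i ≠ 1` and using Kraft gives
`1 - q ≤ 2^(R - μ) (2^μ - 1)` with `μ = l(1)`, while `q ≤ 2^(R - μ)` directly. Hence
`g(l(1)) ≤ R`. -/

open Finset Real Filter

noncomputable def redundancyLowerBound (q : ℝ) (μ : ℕ) : ℝ :=
  μ + logb 2 (max q ((1 - q) / ((2 : ℝ) ^ μ - 1)))

lemma add_logb_le_iff_le_rpow {a b x : ℝ} (hx : 0 < x) :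
    a + logb 2 x ≤ b ↔ x ≤ 2 ^ (b - a) := by
  rw [← le_sub_iff_add_le', logb_le_iff_le_rpow one_lt_two hx]

lemma add_logb_le_redundancyLowerBound {q : ℝ} (hq : 0 < q) (μ : ℕ) :
    μ + logb 2 q ≤ redundancyLowerBound q μ := by
  unfold redundancyLowerBound
  gcongr
  · exact one_lt_two
  · exact le_max_left _ _

lemma exists_forall_redundancyLowerBound_le {q : ℝ} (hq : 0 < q) :
    ∃ μ : ℕ, 1 ≤ μ ∧ ∀ ν : ℕ, 1 ≤ ν → redundancyLowerBound q μ ≤ redundancyLowerBound q ν := by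
  have htendsto : Tendsto (fun k : ℕ => redundancyLowerBound q (k + 1)) cofinite atTop := by
    rw [Nat.cofinite_eq_atTop]
    refine tendsto_atTop_mono (fun k => add_logb_le_redundancyLowerBound hq (k + 1)) ?_
    exact tendsto_atTop_add_const_right _ _ <|
      tendsto_natCast_atTop_atTop.comp (tendsto_add_atTop_nat 1)
  obtain ⟨k, hk⟩ := htendsto.exists_forall_le
  refine ⟨k + 1, Nat.le_add_left 1 k, fun ν hν => ?_⟩
  obtain ⟨j, rfl⟩ := Nat.exists_eq_add_of_le' hν
  exact hk j

lemma one_sub_le_rpow_mul_of_kraft {ι : Type*} [Fintype ι] [DecidableEq ι] {p L : ι → ℝ} {R : ℝ}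
    (hp : ∀ i, 0 < p i) (hsum : ∑ i, p i = 1) (hkraft : ∑ i, (2 : ℝ) ^ (-L i) ≤ 1)
    (hR : ∀ i, L i + logb 2 (p i) ≤ R) (i₀ : ι) :
    1 - p i₀ ≤ 2 ^ (R - L i₀) * (2 ^ L i₀ - 1) := by
  have hsplit := add_sum_erase univ p (mem_univ i₀)
  have hsplitKraft := add_sum_erase univ (fun i => (2 : ℝ) ^ (-L i)) (mem_univ i₀)
  calc 1 - p i₀ = ∑ i ∈ univ.erase i₀, p i := by linarith
    _ ≤ ∑ i ∈ univ.erase i₀, 2 ^ R * (2 : ℝ) ^ (-L i) := by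
        refine sum_le_sum fun i _ => ?_
        rw [← rpow_add two_pos, ← sub_eq_add_neg]
        exact (add_logb_le_iff_le_rpow (hp i)).mp (hR i)
    _ = 2 ^ R * ∑ i ∈ univ.erase i₀, (2 : ℝ) ^ (-L i) := (mul_sum _ _ _).symm
    _ ≤ 2 ^ R * (1 - 2 ^ (-L i₀)) := by gcongr; linarith
    _ = 2 ^ (R - L i₀) * (2 ^ L i₀ - 1) := by
        rw [rpow_sub two_pos, rpow_neg zero_le_two]
        field_simp

lemma redundancyLowerBound_le_of_kraft {ι : Type*} [Fintype ι] [DecidableEq ι] {p L : ι → ℝ}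
    {R : ℝ} (hp : ∀ i, 0 < p i) (hsum : ∑ i, p i = 1) (hkraft : ∑ i, (2 : ℝ) ^ (-L i) ≤ 1)
    (hR : ∀ i, L i + logb 2 (p i) ≤ R) {i₀ : ι} {μ : ℕ} (hμ : L i₀ = μ) :
    redundancyLowerBound (p i₀) μ ≤ R := by
  have htail := one_sub_le_rpow_mul_of_kraft hp hsum hkraft hR i₀
  rw [hμ, rpow_natCast] at htail
  unfold redundancyLowerBound
  rw [add_logb_le_iff_le_rpow (lt_max_of_lt_left (hp i₀))]
  refine max_le ?_ (div_le_of_le_mul₀ ?_ (rpow_nonneg zero_le_two _) htail)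
  · exact (add_logb_le_iff_le_rpow (hp i₀)).mp (hμ ▸ hR i₀)
  · exact sub_nonneg.mpr (one_le_pow₀ one_le_two)

lemma le_Rstar {n : ℕ} (l : Fin n → ℤ) (p : Fin n → ℝ) (i : Fin n) :
    (l i : ℝ) + logb 2 (p i) ≤ Rstar n l p :=
  le_ciSup (f := fun i => (l i : ℝ) + logb 2 (p i)) (Set.finite_range _).bddAbove i

lemma redundancyLowerBound_le_Rstar {n : ℕ} {p : Fin n → ℝ} {l : Fin n → ℤ}
    (hp : IsSource n p) (hl : IsCLV n l) (i₀ : Fin n) :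
    redundancyLowerBound (p i₀) (l i₀).toNat ≤ Rstar n l p := by
  refine redundancyLowerBound_le_of_kraft (L := fun i => (l i : ℝ)) hp.1 hp.2.1 ?_
    (le_Rstar l p) ?_
  · simpa only [← Int.cast_neg, rpow_intCast] using hl.2
  · exact_mod_cast (Int.toNat_of_nonneg (zero_le_one.trans (hl.1 i₀))).symm

lemma isCLV_const (n : ℕ) : IsCLV n fun _ => n := by
  refine ⟨fun i => by have := i.pos; simp only; omega, ?_⟩
  rw [sum_const, card_univ, Fintype.card_fin, nsmul_eq_mul, zpow_neg, zpow_natCast,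
    ← div_eq_mul_inv, div_le_one (by positivity)]
  exact_mod_cast Nat.lt_two_pow_self.le

lemma le_RstarOpt {n : ℕ} {p : Fin n → ℝ} {a : ℝ} (h : ∀ l, IsCLV n l → a ≤ Rstar n l p) :
    a ≤ RstarOpt n p :=
  le_csInf ⟨_, _, isCLV_const n, rfl⟩ fun _ ⟨l, hl, hr⟩ => hr ▸ h l hl

theorem stmt9 (n : ℕ) (hn : 2 ≤ n) (p : Fin n → ℝ) (hp : IsSource n p) :
    ∃ μ : ℕ, 1 ≤ μ ∧
      (∀ ν : ℕ, 1 ≤ ν →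
        (μ:ℝ) + Real.logb 2 (max (p ⟨0, by omega⟩)
            ((1 - p ⟨0, by omega⟩) / ((2:ℝ) ^ μ - 1))) ≤
          (ν:ℝ) + Real.logb 2 (max (p ⟨0, by omega⟩)
            ((1 - p ⟨0, by omega⟩) / ((2:ℝ) ^ ν - 1)))) ∧
      (μ:ℝ) + Real.logb 2 (max (p ⟨0, by omega⟩)
          ((1 - p ⟨0, by omega⟩) / ((2:ℝ) ^ μ - 1))) ≤ RstarOpt n p := by
  obtain ⟨μ, hμ, hmin⟩ := exists_forall_redundancyLowerBound_le (hp.1 ⟨0, by omega⟩)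
  refine ⟨μ, hμ, hmin, le_RstarOpt fun l hl => ?_⟩
  have hl₀ : 1 ≤ (l ⟨0, by omega⟩).toNat := by have := hl.1 ⟨0, by omega⟩; omega
  exact (hmin _ hl₀).trans (redundancyLowerBound_le_Rstar hp hl _)
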